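/- arXiv:1510.07933 — 5 statements merged into one kernel-verified Lean document; each statement's English description precedes it below -/
import Mathlib

section
/- Let F : ℝⁿ → ℝⁿ be continuous and positively homogeneous of degree m−1 (m ≥ 2), and suppose x = 0 is the only solution of min{x, F(x)} = 0 (componentwise minimum). Then for every q ∈ ℝⁿ, the solution set {x : min{x, F(x)+q} = 0} is bounded (and hence compact, being closed). -/
open Topology

lemma min_scale_zero {a b c d : ℝ} (hc : 0 < c) (hd : 0 < d) (h : min a b = 0) :
    min (c * a) (d * b) = 0 := by
  have ha : 0 ≤ a := by rw [← h]; exact min_le_left a b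
  have hb : 0 ≤ b := by rw [← h]; exact min_le_right a b
  rcases min_choice a b with h' | h'
  · have : a = 0 := by rw [← h, h']
    rw [this, mul_zero]
    exact min_eq_left (by positivity)
  · have : b = 0 := by rw [← h, h']
    rw [this, mul_zero]
    exact min_eq_right (by positivity)

/-- If 0 is the only solution of min{x, F(x)} = 0, then for every q
the solution set of min{x, F(x)+q} = 0 is bounded. -/
theorem tcp_solution_set_bounded (n m : ℕ) (hm : 2 ≤ m)
    (F : (Fin n → ℝ) → Fin n → ℝ)
    (hcont : Continuous F)
    (hhom : ∀ L : ℝ, 0 < L → ∀ x, F (L • x) = L ^ (m - 1) • F x)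
    (h0 : ∀ x : Fin n → ℝ, (∀ i, min (x i) (F x i) = 0) → x = 0)
    (q : Fin n → ℝ) :
    Bornology.IsBounded {x : Fin n → ℝ | ∀ i, min (x i) (F x i + q i) = 0} := by
  by_contra hb
  rw [isBounded_iff_forall_norm_le] at hb
  push_neg at hb
  choose u hu hnorm using fun k : ℕ => hb (k : ℝ)
  set L : ℕ → ℝ := fun k => ‖u k‖ with hL
  have hLpos : ∀ k, 0 < L k := fun k =>
    lt_of_le_of_lt (Nat.cast_nonneg k) (hnorm k)
  set y : ℕ → Fin n → ℝ := fun k => (L k)⁻¹ • u k with hy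
  have hynorm : ∀ k, ‖y k‖ = 1 := by
    intro k
    rw [hy, norm_smul, norm_inv, Real.norm_eq_abs, abs_of_pos (hLpos k)]
    exact inv_mul_cancel₀ (hLpos k).ne'
  -- key relation for normalized points
  have key : ∀ k i,
      min (y k i) (F (y k) i + ((L k)⁻¹) ^ (m - 1) * q i) = 0 := by
    intro k i
    have hFy : F (y k) = ((L k)⁻¹) ^ (m - 1) • F (u k) :=
      hhom (L k)⁻¹ (inv_pos.mpr (hLpos k)) (u k)
    have : F (y k) i + ((L k)⁻¹) ^ (m - 1) * q i
        = ((L k)⁻¹) ^ (m - 1) * (F (u k) i + q i) := by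
      rw [hFy]; simp [Pi.smul_apply, smul_eq_mul, mul_add]
    rw [this]
    have hyi : y k i = (L k)⁻¹ * u k i := by simp [hy]
    rw [hyi]
    exact min_scale_zero (inv_pos.mpr (hLpos k))
      (pow_pos (inv_pos.mpr (hLpos k)) (m - 1)) (hu k i)
  -- compactness: extract convergent subsequence on the unit sphere
  have hsphere : ∀ k, y k ∈ Metric.sphere (0 : Fin n → ℝ) 1 := by
    intro k; simpa [mem_sphere_iff_norm] using hynorm k
  obtain ⟨z, hz, φ, hφ, hyz⟩ :=
    (isCompact_sphere (0 : Fin n → ℝ) 1).tendsto_subseq hsphere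
  -- the scaling factor tends to 0
  have hLtop : Filter.Tendsto (fun k => L (φ k)) Filter.atTop Filter.atTop := by
    apply Filter.tendsto_atTop_mono
      (fun k => le_of_lt (lt_of_le_of_lt (Nat.cast_le.mpr (hφ.le_apply)) (hnorm (φ k))))
    exact tendsto_natCast_atTop_atTop
  have hc0 : Filter.Tendsto (fun k => ((L (φ k))⁻¹) ^ (m - 1)) Filter.atTop (𝓝 0) := by
    have h1 : Filter.Tendsto (fun k => (L (φ k))⁻¹) Filter.atTop (𝓝 0) :=
      Filter.Tendsto.inv_tendsto_atTop hLtop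
    have := h1.pow (m - 1)
    rwa [zero_pow (by omega : m - 1 ≠ 0)] at this
  -- take limits componentwise
  have hz0 : ∀ i, min (z i) (F z i) = 0 := by
    intro i
    have hyi : Filter.Tendsto (fun k => y (φ k) i) Filter.atTop (𝓝 (z i)) :=
      ((continuous_apply i).continuousAt.tendsto.comp hyz)
    have hFi : Filter.Tendsto (fun k => F (y (φ k)) i) Filter.atTop (𝓝 (F z i)) :=
      (((continuous_apply i).comp hcont).continuousAt.tendsto.comp hyz)
    have hqi : Filter.Tendsto
        (fun k => F (y (φ k)) i + ((L (φ k))⁻¹) ^ (m - 1) * q i)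
        Filter.atTop (𝓝 (F z i)) := by
      have := hFi.add ((hc0.mul_const (q i)))
      simpa using this
    have hmin : Filter.Tendsto
        (fun k => min (y (φ k) i) (F (y (φ k)) i + ((L (φ k))⁻¹) ^ (m - 1) * q i))
        Filter.atTop (𝓝 (min (z i) (F z i))) := hyi.min hqi
    have : Filter.Tendsto (fun _ : ℕ => (0 : ℝ)) Filter.atTop (𝓝 (min (z i) (F z i))) := by
      simpa only [key] using hmin
    exact (tendsto_nhds_unique tendsto_const_nhds this).symm
  have hzz : z = 0 := h0 z hz0
  have : ‖z‖ = 1 := by simpa [mem_sphere_iff_norm] using hz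
  rw [hzz] at this
  simp at this
end

section
/- Let A be a Z-tensor with induced map F(x) = A x^{m−1}. If A is a Q-tensor (TCP(A,q) is solvable for every q ∈ ℝⁿ), then for every q ≥ 0 there exists x ≥ 0 with F(x) = q. -/
/-- A Z-tensor with the Q-property satisfies: for every q ≥ 0 there is
x ≥ 0 with F(x) = q. -/
theorem Z_Q_tensor_surjective_on_nonneg (n m : ℕ) (hm : 2 ≤ m)
    (a : Fin n → (Fin (m - 1) → Fin n) → ℝ)
    (hZ : ∀ i (j : Fin (m - 1) → Fin n), ¬ (∀ t, j t = i) → a i j ≤ 0)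
    (F : (Fin n → ℝ) → Fin n → ℝ)
    (hF : ∀ x i, F x i = ∑ j : Fin (m - 1) → Fin n, a i j * ∏ t, x (j t))
    (hQ : ∀ q : Fin n → ℝ, ∃ x : Fin n → ℝ,
      (∀ i, 0 ≤ x i) ∧ (∀ i, 0 ≤ F x i + q i) ∧ ∑ i, x i * (F x i + q i) = 0) :
    ∀ q : Fin n → ℝ, (∀ i, 0 ≤ q i) → ∃ x : Fin n → ℝ, (∀ i, 0 ≤ x i) ∧ F x = q := by
  intro q hq
  obtain ⟨x, hx, hy, hcomp⟩ := hQ (fun i => -q i)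
  refine ⟨x, hx, ?_⟩
  -- each term in the complementarity sum is nonneg, hence zero
  have hterm : ∀ i, x i * (F x i + -q i) = 0 := by
    intro i
    have hall : ∀ j ∈ Finset.univ, 0 ≤ x j * (F x j + -q j) :=
      fun j _ => mul_nonneg (hx j) (hy j)
    have := (Finset.sum_eq_zero_iff_of_nonneg hall).mp hcomp i (Finset.mem_univ i)
    exact this
  funext i
  by_contra hne
  have hyi : 0 < F x i - q i := by
    have := hy i
    rcases lt_or_eq_of_le this with h | h
    · linarith [h]
    · exfalso; apply hne; linarith [h.symm]
  have hxi : x i = 0 := by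
    have := hterm i
    rcases mul_eq_zero.mp this with h | h
    · exact h
    · exfalso; linarith
  -- Fin (m-1) is nonempty
  have hmn : 0 < m - 1 := by omega
  have hFnp : F x i ≤ 0 := by
    rw [hF]
    apply Finset.sum_nonpos
    intro j _
    by_cases hd : ∀ t, j t = i
    · have : (∏ t, x (j t)) = 0 := by
        apply Finset.prod_eq_zero (Finset.mem_univ (⟨0, hmn⟩ : Fin (m - 1)))
        rw [hd ⟨0, hmn⟩, hxi]
      rw [this, mul_zero]
    · exact mul_nonpos_of_nonpos_of_nonneg (hZ i j hd)
        (Finset.prod_nonneg fun t _ => hx (j t))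
  have := hq i
  linarith
end

section
/- Define F : ℝ² → ℝ² by F(x₁,x₂) = (x₁³ − 2x₁²x₂, x₂³), and let q = (0,−1). Then both x = (0,1) and x = (2,1) solve the complementarity problem: x ≥ 0, F(x)+q ≥ 0, and ⟨x, F(x)+q⟩ = 0. In particular, the tensor complementarity problem for this strong M-tensor does not have a unique solution. -/
/-- For F(x₁,x₂) = (x₁³ - 2x₁²x₂, x₂³) and q = (0,-1), both (0,1) and
(2,1) solve the complementarity problem; in particular the solution is not unique. -/
theorem example_nonunique_solution
    (F : ℝ × ℝ → ℝ × ℝ)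
    (hF : ∀ p : ℝ × ℝ, F p = (p.1 ^ 3 - 2 * p.1 ^ 2 * p.2, p.2 ^ 3))
    (q : ℝ × ℝ) (hq : q = (0, -1))
    (sol : ℝ × ℝ → Prop)
    (hsol : ∀ p : ℝ × ℝ, sol p ↔
      (0 ≤ p.1 ∧ 0 ≤ p.2 ∧ 0 ≤ (F p).1 + q.1 ∧ 0 ≤ (F p).2 + q.2 ∧
        p.1 * ((F p).1 + q.1) + p.2 * ((F p).2 + q.2) = 0)) :
    sol (0, 1) ∧ sol (2, 1) ∧ ¬ (∀ p p' : ℝ × ℝ, sol p → sol p' → p = p') := by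
  have h1 : sol (0, 1) := by
    rw [hsol, hF, hq]; norm_num
  have h2 : sol (2, 1) := by
    rw [hsol, hF, hq]; norm_num
  refine ⟨h1, h2, fun h => ?_⟩
  have := h _ _ h1 h2
  simp at this
end

section
/- Fix m ≥ 3 and n ≥ 1, and real numbers c_{ik} for i,k ∈ {1,…,n} with c_{ik} ≤ 0 for k ≠ i and c_{ii} + Σ_{k≠i} c_{ik} > 0 for each i. Define F : ℝⁿ → ℝⁿ by F_i(y) = Σ_k c_{ik} y_k^{m−1}. Then for every q ∈ ℝⁿ, the complementarity problem y ≥ 0, F(y)+q ≥ 0, ⟨y, F(y)+q⟩ = 0 has at most one solution. -/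
/-!
Let `y, z` be two solutions and let `j` maximise `g k = y_k^(m-1) - z_k^(m-1)`. If `g j > 0`
then `y_j > 0`, so complementarity forces `F(y)_j + q_j = 0 ≤ F(z)_j + q_j`. On the other hand
`F(y)_j - F(z)_j = Σ_k c_{jk} g_k ≥ (c_{jj} + Σ_{k≠j} c_{jk}) g_j > 0`, because the off-diagonal
entries are nonpositive and `g_k ≤ g_j`. Hence `g ≤ 0`, i.e. `y ≤ z`, and by symmetry `y = z`.
-/

open Finset

def IsComplementaritySolution {ι : Type*} [Fintype ι] (F : (ι → ℝ) → ι → ℝ) (q y : ι → ℝ) :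
    Prop :=
  (∀ i, 0 ≤ y i) ∧ (∀ i, 0 ≤ F y i + q i) ∧ ∑ i, y i * (F y i + q i) = 0

namespace IsComplementaritySolution

variable {ι : Type*} [Fintype ι] {F : (ι → ℝ) → ι → ℝ} {q y z : ι → ℝ}

theorem map_add_eq_zero (hy : IsComplementaritySolution F q y) {j : ι} (hj : 0 < y j) :
    F y j + q j = 0 := by
  have hterm := (sum_eq_zero_iff_of_nonneg fun i _ => mul_nonneg (hy.1 i) (hy.2.1 i)).1 hy.2.2
  exact (mul_eq_zero.1 (hterm j (mem_univ j))).resolve_left hj.ne'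

theorem map_sub_map_nonpos (hy : IsComplementaritySolution F q y)
    (hz : IsComplementaritySolution F q z) {j : ι} (hj : 0 < y j) : F y j - F z j ≤ 0 := by
  linarith [hy.map_add_eq_zero hj, hz.2.1 j]

end IsComplementaritySolution

theorem add_sum_erase_mul_le_sum_mul {ι : Type*} [Fintype ι] [DecidableEq ι] {a g : ι → ℝ}
    {j : ι} (ha : ∀ k, k ≠ j → a k ≤ 0) (hg : ∀ k, g k ≤ g j) :
    (a j + ∑ k ∈ univ.erase j, a k) * g j ≤ ∑ k, a k * g k := by
  rw [add_mul, sum_mul, ← add_sum_erase _ _ (mem_univ j)]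
  exact add_le_add_right (sum_le_sum fun k hk =>
    mul_le_mul_of_nonpos_left (hg k) (ha k (ne_of_mem_erase hk))) _

theorem le_of_isComplementaritySolution {ι : Type*} [Fintype ι] [DecidableEq ι] {p : ℕ}
    (hp : p ≠ 0) {c : ι → ι → ℝ} (hoff : ∀ i k, k ≠ i → c i k ≤ 0)
    (hdom : ∀ i, 0 < c i i + ∑ k ∈ univ.erase i, c i k) {F : (ι → ℝ) → ι → ℝ}
    (hF : ∀ y i, F y i = ∑ k, c i k * y k ^ p) {q y z : ι → ℝ}
    (hy : IsComplementaritySolution F q y) (hz : IsComplementaritySolution F q z) : y ≤ z := by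
  intro i
  have : Nonempty ι := ⟨i⟩
  set g : ι → ℝ := fun k => y k ^ p - z k ^ p with hg
  obtain ⟨j, hj⟩ := Finite.exists_max g
  suffices hgj : g j ≤ 0 from
    (pow_le_pow_iff_left₀ (hy.1 i) (hz.1 i) hp).1 (sub_nonpos.1 ((hj i).trans hgj))
  by_contra! hgj
  have hyj : 0 < y j :=
    (hz.1 j).trans_lt (lt_of_pow_lt_pow_left₀ p (hy.1 j) (sub_pos.1 hgj))
  have hFj : F y j - F z j = ∑ k, c j k * g k := by
    simp only [hF, hg, mul_sub, sum_sub_distrib]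
  linarith [mul_pos (hdom j) hgj, add_sum_erase_mul_le_sum_mul (hoff j) hj,
    hy.map_sub_map_nonpos hz hyj]

/-- For a strictly diagonally dominant Z-pattern map
F_i(y) = Σ_k c_{ik} y_k^{m-1}, each complementarity problem has at most one solution. -/
theorem diagonally_dominant_unique_solution (n m : ℕ) (hm : 3 ≤ m)
    (c : Fin n → Fin n → ℝ)
    (hoff : ∀ i k, k ≠ i → c i k ≤ 0)
    (hdom : ∀ i, 0 < c i i + ∑ k ∈ Finset.univ.erase i, c i k)
    (F : (Fin n → ℝ) → Fin n → ℝ)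
    (hF : ∀ y i, F y i = ∑ k, c i k * y k ^ (m - 1))
    (q : Fin n → ℝ) (y z : Fin n → ℝ)
    (hy : (∀ i, 0 ≤ y i) ∧ (∀ i, 0 ≤ F y i + q i) ∧ ∑ i, y i * (F y i + q i) = 0)
    (hz : (∀ i, 0 ≤ z i) ∧ (∀ i, 0 ≤ F z i + q i) ∧ ∑ i, z i * (F z i + q i) = 0) :
    y = z := by
  have hp : m - 1 ≠ 0 := by omega
  exact le_antisymm (le_of_isComplementaritySolution hp hoff hdom hF hy hz)
    (le_of_isComplementaritySolution hp hoff hdom hF hz hy)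
end

section
/- Let F : ℝⁿ → ℝⁿ be continuous and positively homogeneous of degree m−1 (m ≥ 2). The following are equivalent: (1) for every q ∈ ℝⁿ there exists u ≥ 0 with F(u) + q ≥ 0 (feasibility of TCP(A,q) for all q); (2) there exists d > 0 with F(d) > 0. -/
/-- For continuous positively homogeneous F, feasibility of TCP(A,q)
for all q is equivalent to the existence of d > 0 with F(d) > 0. -/
theorem feasibility_iff_S_property (n m : ℕ) (hm : 2 ≤ m)
    (F : (Fin n → ℝ) → Fin n → ℝ)
    (hcont : Continuous F)
    (hhom : ∀ L : ℝ, 0 < L → ∀ x, F (L • x) = L ^ (m - 1) • F x) :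
    (∀ q : Fin n → ℝ, ∃ u : Fin n → ℝ, (∀ i, 0 ≤ u i) ∧ ∀ i, 0 ≤ F u i + q i) ↔
    (∃ d : Fin n → ℝ, (∀ i, 0 < d i) ∧ ∀ i, 0 < F d i) := by
  constructor
  · intro h
    obtain ⟨u, hu0, huF⟩ := h (fun _ => -1)
    have hFu : ∀ i, 1 ≤ F u i := by
      intro i; have := huF i; linarith
    set S : Set ℝ := {t : ℝ | ∀ i, 0 < F (u + t • (fun _ => (1:ℝ))) i} with hS
    have hopen : IsOpen S := by
      have hEq : S = ⋂ i, {t : ℝ | 0 < F (u + t • (fun _ => (1:ℝ))) i} := by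
        ext t; simp [hS, Set.mem_iInter]
      rw [hEq]
      apply isOpen_iInter_of_finite
      intro i
      have hc : Continuous fun t : ℝ => F (u + t • (fun _ => (1:ℝ))) i := by
        exact (continuous_apply i).comp (hcont.comp (by continuity))
      exact isOpen_lt continuous_const hc
    have h0 : (0:ℝ) ∈ S := by
      intro i
      have : u + (0:ℝ) • (fun _ => (1:ℝ)) = u := by simp
      rw [this]
      linarith [hFu i]
    obtain ⟨ε, hε, hball⟩ := Metric.isOpen_iff.mp hopen 0 h0
    have hmem : (ε/2) ∈ S := by
      apply hball
      rw [Metric.mem_ball, Real.dist_eq, sub_zero, abs_of_pos (by linarith : (0:ℝ) < ε/2)]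
      linarith
    refine ⟨u + (ε/2) • (fun _ => (1:ℝ)), ?_, ?_⟩
    · intro i
      have := hu0 i
      simp only [Pi.add_apply, Pi.smul_apply, smul_eq_mul, mul_one]
      linarith
    · exact hmem
  · rintro ⟨d, hd, hFd⟩ q
    set L : ℝ := 1 + ∑ i, |q i| / F d i with hLdef
    have hterm : ∀ i ∈ Finset.univ, 0 ≤ |q i| / F d i :=
      fun i _ => div_nonneg (abs_nonneg _) (hFd i).le
    have hL1 : 1 ≤ L := le_add_of_nonneg_right (Finset.sum_nonneg hterm)
    have hLpos : 0 < L := lt_of_lt_of_le one_pos hL1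
    refine ⟨L • d, ?_, ?_⟩
    · intro i
      exact (mul_pos hLpos (hd i)).le
    · intro i
      rw [hhom L hLpos]
      simp only [Pi.smul_apply, smul_eq_mul]
      have hLm : L ≤ L ^ (m-1) := le_self_pow₀ hL1 (by omega)
      have hsingle : |q i| / F d i ≤ L := by
        have := Finset.single_le_sum hterm (Finset.mem_univ i)
        linarith
      have hLq : |q i| ≤ L * F d i := by
        have h1 : (|q i| / F d i) * F d i ≤ L * F d i :=
          mul_le_mul_of_nonneg_right hsingle (hFd i).le
        rwa [div_mul_cancel₀ _ (hFd i).ne'] at h1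
      have h2 : L * F d i ≤ L ^ (m-1) * F d i :=
        mul_le_mul_of_nonneg_right hLm (hFd i).le
      have h3 : -q i ≤ |q i| := neg_le_abs _
      linarith
end
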